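/- Weighted interpolation inequality with distance weight: For every k > −1 there is a constant C(k) > 0, depending only on k, such that for every F : (0,1) → ℝ with a weak derivative F' satisfying ‖d^{(k+1)/2}F‖_{L²} < ∞ and ‖d^{(k+1)/2}F'‖_{L²} < ∞: ‖d^{k/2}F‖_{L²} ≤ C(k)·(‖d^{(k+1)/2}F‖_{L²} + ‖d^{(k+1)/2}F‖_{L²}^{1/2}·‖d^{(k+1)/2}F'‖_{L²}^{1/2}). Consequently, for every ε ∈ (0,1) there is a constant C(k,ε) > 0 with ‖d^{k/2}F‖_{L²} ≤ C(k,ε)·‖d^{(k+1)/2}F‖_{L²} + ε·‖d^{(k+1)/2}F'‖_{L²}. -/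

import Mathlib

open Set MeasureTheory Filter

noncomputable section

/-- Distance from `x` to the boundary `{0,1}` of the interval `(0,1)`. -/
def bdist (x : ℝ) : ℝ := min x (1 - x)

/-- Weighted `L²(0,1)` norm `‖w·f‖`. -/
def wL2 (w f : ℝ → ℝ) : ℝ := Real.sqrt (∫ x in (0:ℝ)..1, (w x * f x) ^ 2)

/-- Membership in `H³(0,1)`: twice continuously differentiable up to the boundary,
with third derivative square integrable. -/
def MemH3 (φ : ℝ → ℝ) : Prop :=
  ContDiffOn ℝ 2 φ (Icc 0 1) ∧
  IntervalIntegrable (fun x => (deriv (deriv (deriv φ)) x) ^ 2) volume 0 1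

/-- `G` is the weak derivative of the locally integrable function `F` on `(0,1)`:
`G` is locally integrable and `F` is (a version of) its primitive. -/
def HasWeakDeriv (F G : ℝ → ℝ) : Prop :=
  ∀ a ∈ Ioo (0:ℝ) 1, ∀ b ∈ Ioo (0:ℝ) 1,
    IntervalIntegrable G volume a b ∧ F b - F a = ∫ y in a..b, G y

namespace WII

lemma continuous_bdist : Continuous bdist :=
  continuous_id.min (continuous_const.sub continuous_id)

lemma bdist_nonneg {x : ℝ} (h0 : 0 ≤ x) (h1 : x ≤ 1) : 0 ≤ bdist x :=
  le_min h0 (by linarith)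

lemma bdist_eq_left {x : ℝ} (h : x ≤ 1/2) : bdist x = x :=
  min_eq_left (by linarith)

lemma bdist_reflect (x : ℝ) : bdist (1 - x) = bdist x := by
  unfold bdist; rw [sub_sub_cancel, min_comm]


/-- Fubini swap for triangle regions. -/
lemma fub_swap {a b : ℝ} (hab : a ≤ b) {φ ψ : ℝ → ℝ}
    (hφ : IntegrableOn φ (Ioc a b)) (hψ : IntegrableOn ψ (Ioc a b)) :
    ∫ x in Ioc a b, φ x * ∫ y in Ioc a x, ψ y
      = ∫ y in Ioc a b, ψ y * ∫ x in Ioc y b, φ x := by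
  set μ := volume.restrict (Ioc a b) with hμ
  set f : ℝ × ℝ → ℝ := {q : ℝ × ℝ | q.2 ≤ q.1}.indicator (fun p => φ p.1 * ψ p.2) with hf
  have hs : MeasurableSet {q : ℝ × ℝ | q.2 ≤ q.1} :=
    measurableSet_le measurable_snd measurable_fst
  have hprod : Integrable (fun p : ℝ × ℝ => φ p.1 * ψ p.2) (μ.prod μ) := hφ.mul_prod hψ
  have hind : Integrable f (μ.prod μ) := hprod.indicator hs
  have hswap := MeasureTheory.integral_integral_swap (f := fun x y => f (x, y))
    (μ := μ) (ν := μ) hind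
  have hL : ∀ x ∈ Ioc a b, (∫ y, f (x, y) ∂μ) = φ x * ∫ y in Ioc a x, ψ y := by
    intro x hx
    have h1 : (fun y => f (x, y)) = (Iic x).indicator (fun y => φ x * ψ y) := by
      ext y
      by_cases h : y ≤ x <;> simp [hf, Set.indicator_apply, h, Set.mem_setOf_eq]
    rw [h1, integral_indicator measurableSet_Iic, hμ,
      Measure.restrict_restrict measurableSet_Iic]
    have h2 : Iic x ∩ Ioc a b = Ioc a x := by
      rw [inter_comm, Set.Ioc_inter_Iic, min_eq_right hx.2]
    rw [h2, MeasureTheory.integral_const_mul]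
  have hR : ∀ y ∈ Ioc a b, (∫ x, f (x, y) ∂μ) = ψ y * ∫ x in Ioc y b, φ x := by
    intro y hy
    have h1 : (fun x => f (x, y)) = (Ici y).indicator (fun x => φ x * ψ y) := by
      ext x
      by_cases h : y ≤ x <;> simp [hf, Set.indicator_apply, h, Set.mem_setOf_eq]
    rw [h1, integral_indicator measurableSet_Ici, hμ,
      Measure.restrict_restrict measurableSet_Ici]
    have h2 : Ici y ∩ Ioc a b = Icc y b := by
      ext x
      simp only [mem_inter_iff, mem_Ici, mem_Ioc, mem_Icc]
      constructor
      · rintro ⟨h1', h2', h3'⟩; exact ⟨h1', h3'⟩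
      · rintro ⟨h1', h2'⟩; exact ⟨h1', lt_of_lt_of_le hy.1 h1', h2'⟩
    rw [h2, integral_Icc_eq_integral_Ioc, MeasureTheory.integral_mul_const, mul_comm]
  calc ∫ x in Ioc a b, φ x * ∫ y in Ioc a x, ψ y
      = ∫ x, (∫ y, f (x, y) ∂μ) ∂μ := by
        refine (setIntegral_congr_fun measurableSet_Ioc fun x hx => ?_).symm
        exact hL x hx
    _ = ∫ y, (∫ x, f (x, y) ∂μ) ∂μ := hswap
    _ = ∫ y in Ioc a b, ψ y * ∫ x in Ioc y b, φ x := by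
        refine setIntegral_congr_fun measurableSet_Ioc fun y hy => ?_
        exact hR y hy

lemma int_mul_primitive {a b : ℝ} (hab : a ≤ b) {φ ψ : ℝ → ℝ}
    (hφ : IntegrableOn φ (Ioc a b)) (hψ : IntegrableOn ψ (Ioc a b)) :
    IntegrableOn (fun x => φ x * ∫ y in Ioc a x, ψ y) (Ioc a b) := by
  have hψ' : IntegrableOn ψ (Icc a b) := by
    rwa [integrableOn_Icc_iff_integrableOn_Ioc]
  have hHc : ContinuousOn (fun x => ∫ y in Ioc a x, ψ y) (Icc a b) :=
    intervalIntegral.continuousOn_primitive hψ'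
  obtain ⟨M, hM⟩ := isCompact_Icc.exists_bound_of_continuousOn hHc
  have := Integrable.bdd_mul (c := M) (f := fun x => ∫ y in Ioc a x, ψ y) (g := φ) hφ
    ((hHc.mono Ioc_subset_Icc_self).aestronglyMeasurable measurableSet_Ioc)
    ((ae_restrict_iff' measurableSet_Ioc).2 (Eventually.of_forall fun x hx =>
      hM x (Ioc_subset_Icc_self hx)))
  exact this.congr (Eventually.of_forall fun x => mul_comm _ _)

lemma fub1 {a b : ℝ} (hab : a ≤ b) {G : ℝ → ℝ} (hG : IntegrableOn G (Ioc a b)) :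
    (∫ t in Ioc a b, G t) ^ 2 = 2 * ∫ x in Ioc a b, G x * ∫ y in Ioc a x, G y := by
  have key := fub_swap hab hG hG
  have hsplit : ∀ y ∈ Ioc a b,
      ∫ x in Ioc y b, G x = (∫ t in Ioc a b, G t) - ∫ t in Ioc a y, G t := by
    intro y hy
    have hu : Ioc a y ∪ Ioc y b = Ioc a b := Ioc_union_Ioc_eq_Ioc hy.1.le hy.2
    have hdisj : Disjoint (Ioc a y) (Ioc y b) := Ioc_disjoint_Ioc_of_le le_rfl
    have hadd := setIntegral_union hdisj measurableSet_Ioc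
      (hG.mono_set (by rw [← hu]; exact subset_union_left))
      (hG.mono_set (by rw [← hu]; exact subset_union_right))
    rw [hu] at hadd
    linarith
  have hGH : IntegrableOn (fun x => G x * ∫ y in Ioc a x, G y) (Ioc a b) :=
    int_mul_primitive hab hG hG
  have hR : ∫ y in Ioc a b, G y * ∫ x in Ioc y b, G x
      = (∫ t in Ioc a b, G t) ^ 2 - ∫ x in Ioc a b, G x * ∫ y in Ioc a x, G y := by
    rw [setIntegral_congr_fun measurableSet_Ioc (g := fun y =>
        G y * (∫ t in Ioc a b, G t) - G y * ∫ t in Ioc a y, G t)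
        (fun y hy => by rw [hsplit y hy]; ring)]
    rw [integral_sub (hG.mul_const _) hGH, MeasureTheory.integral_mul_const]
    ring
  rw [hR] at key
  linarith




lemma weak_continuousOn {F G : ℝ → ℝ} (hFG : HasWeakDeriv F G) {c d : ℝ}
    (hc : c ∈ Ioo (0:ℝ) 1) (hd : d ∈ Ioo (0:ℝ) 1) (hcd : c ≤ d) :
    ContinuousOn F (Icc c d) := by
  have hsub : Icc c d ⊆ Ioo (0:ℝ) 1 := fun x hx =>
    ⟨lt_of_lt_of_le hc.1 hx.1, lt_of_le_of_lt hx.2 hd.2⟩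
  have hint : IntervalIntegrable G volume c d := (hFG c hc d hd).1
  have hcont := intervalIntegral.continuousOn_primitive_interval' hint left_mem_uIcc
  have heq : EqOn F (fun x => F c + ∫ t in c..x, G t) (Icc c d) := by
    intro x hx
    have h2 := (hFG c hc x (hsub hx)).2
    simp only
    linarith
  have hcont' : ContinuousOn (fun x => F c + ∫ t in c..x, G t) (Icc c d) := by
    rw [uIcc_of_le hcd] at hcont
    exact continuousOn_const.add hcont
  exact hcont'.congr heq

lemma sq_weakDeriv {F G : ℝ → ℝ} (hFG : HasWeakDeriv F G) :
    HasWeakDeriv (fun x => F x ^ 2) (fun x => 2 * F x * G x) := by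
  have main : ∀ a ∈ Ioo (0:ℝ) 1, ∀ b ∈ Ioo (0:ℝ) 1, a ≤ b →
      IntervalIntegrable (fun x => 2 * F x * G x) volume a b ∧
      F b ^ 2 - F a ^ 2 = ∫ y in a..b, 2 * F y * G y := by
    intro a ha b hb hab
    have hsub : Ioc a b ⊆ Ioo (0:ℝ) 1 := fun x hx =>
      ⟨ha.1.trans hx.1, lt_of_le_of_lt hx.2 hb.2⟩
    have hG1 : IntegrableOn G (Ioc a b) :=
      (intervalIntegrable_iff_integrableOn_Ioc_of_le hab).1 (hFG a ha b hb).1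
    have hFc : ContinuousOn F (Icc a b) := weak_continuousOn hFG ha hb hab
    obtain ⟨M, hM⟩ := isCompact_Icc.exists_bound_of_continuousOn hFc
    have hFasm : AEStronglyMeasurable F (volume.restrict (Ioc a b)) :=
      (hFc.mono Ioc_subset_Icc_self).aestronglyMeasurable measurableSet_Ioc
    have hint : IntegrableOn (fun x => 2 * F x * G x) (Ioc a b) := by
      have h2F : AEStronglyMeasurable (fun x => 2 * F x) (volume.restrict (Ioc a b)) :=
        hFasm.const_mul 2
      have hbd : ∀ᵐ x ∂(volume.restrict (Ioc a b)), ‖2 * F x‖ ≤ 2 * M :=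
        (ae_restrict_iff' measurableSet_Ioc).2 (Eventually.of_forall fun x hx => by
          rw [norm_mul, Real.norm_ofNat]
          exact mul_le_mul_of_nonneg_left (hM x (Ioc_subset_Icc_self hx)) (by norm_num))
      exact Integrable.bdd_mul hG1 h2F hbd
    have hH : ∀ x ∈ Ioc a b, F x = F a + ∫ y in Ioc a x, G y := by
      intro x hx
      have h2 := (hFG a ha x (hsub hx)).2
      rw [intervalIntegral.integral_of_le hx.1.le] at h2
      linarith
    have hFb : F b = F a + ∫ y in Ioc a b, G y := by
      have h2 := (hFG a ha b hb).2
      rw [intervalIntegral.integral_of_le hab] at h2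
      linarith
    have hGH : IntegrableOn (fun x => G x * ∫ y in Ioc a x, G y) (Ioc a b) :=
      int_mul_primitive hab hG1 hG1
    have hsq := fub1 hab hG1
    have hcongr : ∫ y in a..b, 2 * F y * G y
        = ∫ x in Ioc a b, (2 * F a * G x + 2 * (G x * ∫ y in Ioc a x, G y)) := by
      rw [intervalIntegral.integral_of_le hab]
      refine setIntegral_congr_fun measurableSet_Ioc fun x hx => ?_
      rw [hH x hx]; ring
    refine ⟨(intervalIntegrable_iff_integrableOn_Ioc_of_le hab).2 hint, ?_⟩
    rw [hcongr, integral_add (hG1.const_mul _) (hGH.const_mul 2),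
      MeasureTheory.integral_const_mul, MeasureTheory.integral_const_mul, hFb]
    nlinarith [hsq]
  intro a ha b hb
  rcases le_total a b with hab | hba
  · exact main a ha b hb hab
  · obtain ⟨h1, h2⟩ := main b hb a ha hba
    refine ⟨h1.symm, ?_⟩
    show F b ^ 2 - F a ^ 2 = ∫ y in a..b, 2 * F y * G y
    rw [intervalIntegral.integral_symm b a]
    linarith

lemma wFTC {P Q v w : ℝ → ℝ} {a b : ℝ} (ha : a ∈ Ioo (0:ℝ) 1) (hb : b ∈ Ioo (0:ℝ) 1)
    (hab : a ≤ b) (hPQ : HasWeakDeriv P Q)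
    (hv : ContinuousOn v (Icc a b)) (hw : ∀ x ∈ Icc a b, HasDerivAt w (v x) x) :
    ∫ x in Ioc a b, v x * P x
      = w b * P b - w a * P a - ∫ x in Ioc a b, w x * Q x := by
  have hsub : Ioc a b ⊆ Ioo (0:ℝ) 1 := fun x hx =>
    ⟨ha.1.trans hx.1, lt_of_le_of_lt hx.2 hb.2⟩
  have hQ : IntegrableOn Q (Ioc a b) :=
    (intervalIntegrable_iff_integrableOn_Ioc_of_le hab).1 (hPQ a ha b hb).1
  have hwc : ContinuousOn w (Icc a b) := fun x hx =>
    ((hw x hx).continuousAt).continuousWithinAt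
  obtain ⟨Mw, hMw⟩ := isCompact_Icc.exists_bound_of_continuousOn hwc
  have hvInt : IntegrableOn v (Ioc a b) :=
    (hv.integrableOn_Icc).mono_set Ioc_subset_Icc_self
  have hH : ∀ x ∈ Ioc a b, P x = P a + ∫ y in Ioc a x, Q y := by
    intro x hx
    have h2 := (hPQ a ha x (hsub hx)).2
    rw [intervalIntegral.integral_of_le hx.1.le] at h2
    linarith
  have hPb : P b = P a + ∫ y in Ioc a b, Q y := by
    have h2 := (hPQ a ha b hb).2
    rw [intervalIntegral.integral_of_le hab] at h2
    linarith
  have hFTCv : ∀ y ∈ Icc a b, ∫ x in Ioc y b, v x = w b - w y := by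
    intro y hy
    rw [← intervalIntegral.integral_of_le hy.2]
    refine intervalIntegral.integral_eq_sub_of_hasDerivAt (fun x hx => ?_) ?_
    · refine hw x ?_
      rw [uIcc_of_le hy.2] at hx
      exact ⟨hy.1.trans hx.1, hx.2⟩
    · apply ContinuousOn.intervalIntegrable
      apply hv.mono
      rw [uIcc_of_le hy.2]
      exact Icc_subset_Icc hy.1 le_rfl
  have hvP : ∫ x in Ioc a b, v x * P x
      = ∫ x in Ioc a b, (v x * P a + v x * ∫ y in Ioc a x, Q y) := by
    refine setIntegral_congr_fun measurableSet_Ioc fun x hx => ?_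
    rw [hH x hx]; ring
  have hint1 : IntegrableOn (fun x => v x * P a) (Ioc a b) := hvInt.mul_const _
  have hint2 : IntegrableOn (fun x => v x * ∫ y in Ioc a x, Q y) (Ioc a b) :=
    int_mul_primitive hab hvInt hQ
  have h1 : ∫ x in Ioc a b, v x * P a = P a * (w b - w a) := by
    rw [MeasureTheory.integral_mul_const, hFTCv a (left_mem_Icc.2 hab), mul_comm]
  have hwQ : IntegrableOn (fun y => w y * Q y) (Ioc a b) := by
    refine Integrable.bdd_mul (c := Mw) hQ
      ((hwc.mono Ioc_subset_Icc_self).aestronglyMeasurable measurableSet_Ioc) ?_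
    exact (ae_restrict_iff' measurableSet_Ioc).2 (Eventually.of_forall fun x hx =>
      hMw x (Ioc_subset_Icc_self hx))
  have h2 : ∫ x in Ioc a b, v x * ∫ y in Ioc a x, Q y
      = w b * (∫ y in Ioc a b, Q y) - ∫ x in Ioc a b, w x * Q x := by
    rw [fub_swap hab hvInt hQ]
    rw [setIntegral_congr_fun measurableSet_Ioc (g := fun y => w b * Q y - w y * Q y)
      (fun y hy => by rw [hFTCv y (Ioc_subset_Icc_self hy)]; ring)]
    rw [integral_sub (hQ.const_mul _) hwQ, MeasureTheory.integral_const_mul]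
  rw [hvP, integral_add hint1 hint2, h1, h2, hPb]
  ring





lemma weak_contIoo {F G : ℝ → ℝ} (hFG : HasWeakDeriv F G) :
    ContinuousOn F (Ioo (0:ℝ) 1) := by
  intro x hx
  have hc : x/2 ∈ Ioo (0:ℝ) 1 := ⟨by linarith [hx.1], by linarith [hx.1, hx.2]⟩
  have hd : (x+1)/2 ∈ Ioo (0:ℝ) 1 := ⟨by linarith [hx.1], by linarith [hx.2]⟩
  have hcd : x/2 ≤ (x+1)/2 := by linarith [hx.1]
  have hco := weak_continuousOn hFG hc hd hcd
  have hmem : Icc (x/2) ((x+1)/2) ∈ nhds x :=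
    Icc_mem_nhds (by linarith [hx.1]) (by linarith [hx.2])
  exact (hco.continuousAt hmem).continuousWithinAt

lemma weak_asmF {F G : ℝ → ℝ} (hFG : HasWeakDeriv F G) :
    AEStronglyMeasurable F (volume.restrict (Ioc (0:ℝ) 1)) := by
  rw [← Measure.restrict_congr_set Ioo_ae_eq_Ioc]
  exact (weak_contIoo hFG).aestronglyMeasurable measurableSet_Ioo

lemma weak_asmG {F G : ℝ → ℝ} (hFG : HasWeakDeriv F G) :
    AEStronglyMeasurable G (volume.restrict (Ioc (0:ℝ) 1)) := by
  rw [← Measure.restrict_congr_set Ioo_ae_eq_Ioc]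
  have hU : (⋃ n : ℕ, Ioc (1/((n:ℝ)+3)) (1 - 1/((n:ℝ)+3))) = Ioo (0:ℝ) 1 := by
    ext x
    simp only [mem_iUnion, mem_Ioc, mem_Ioo]
    constructor
    · rintro ⟨n, h1, h2⟩
      have hn0 : (0:ℝ) ≤ (n:ℝ) := Nat.cast_nonneg n
      have e1 : (0:ℝ) < 1/((n:ℝ)+3) := by positivity
      constructor <;> nlinarith
    · rintro ⟨h1, h2⟩
      have hb : 0 < min x (1 - x) := lt_min h1 (by linarith)
      obtain ⟨n, hn⟩ := exists_nat_gt (1 / min x (1 - x))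
      have hn1 := (div_lt_iff₀ hb).mp hn
      have hn0 : (0:ℝ) ≤ (n:ℝ) := Nat.cast_nonneg n
      have hkey : 1/((n:ℝ)+3) < min x (1 - x) := by
        rw [div_lt_iff₀ (by positivity)]
        nlinarith [hb]
      exact ⟨n, lt_of_lt_of_le hkey (min_le_left _ _),
        by have := lt_of_lt_of_le hkey (min_le_right _ _); linarith⟩
  rw [← hU, aestronglyMeasurable_iUnion_iff]
  intro n
  have hn0 : (0:ℝ) ≤ (n:ℝ) := Nat.cast_nonneg n
  have ht0 : (0:ℝ) < 1/((n:ℝ)+3) := by positivity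
  have ht2 : 1/((n:ℝ)+3) ≤ 1/2 :=
    one_div_le_one_div_of_le (by norm_num) (by linarith)
  have hmem1 : (1/((n:ℝ)+3)) ∈ Ioo (0:ℝ) 1 := ⟨ht0, by linarith⟩
  have hmem2 : (1 - 1/((n:ℝ)+3)) ∈ Ioo (0:ℝ) 1 := ⟨by linarith, by linarith⟩
  have hle : (1/((n:ℝ)+3)) ≤ 1 - 1/((n:ℝ)+3) := by linarith
  exact ((intervalIntegrable_iff_integrableOn_Ioc_of_le hle).1
    (hFG _ hmem1 _ hmem2).1).aestronglyMeasurable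

lemma sq_weight (p : ℝ) {x : ℝ} (hx : x ∈ Ioc (0:ℝ) 1) (c : ℝ) :
    (bdist x ^ (p/2) * c) ^ 2 = bdist x ^ p * c ^ 2 := by
  have h0 : 0 ≤ bdist x := bdist_nonneg hx.1.le hx.2
  rw [mul_pow, ← Real.rpow_natCast (bdist x ^ (p/2)) 2, ← Real.rpow_mul h0]
  norm_num

lemma bdist_eq_right {x : ℝ} (h : 1/2 ≤ x) : bdist x = 1 - x :=
  min_eq_right (by linarith)

/-- Cauchy-Schwarz bound. -/
lemma cs (k : ℝ) (hk : -1 < k) {F G : ℝ → ℝ}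
    (hmF : AEStronglyMeasurable F (volume.restrict (Ioc (0:ℝ) 1)))
    (hmG : AEStronglyMeasurable G (volume.restrict (Ioc (0:ℝ) 1)))
    (hF2 : IntegrableOn (fun x => bdist x ^ (k+1) * F x ^ 2) (Ioc (0:ℝ) 1))
    (hG2 : IntegrableOn (fun x => bdist x ^ (k+1) * G x ^ 2) (Ioc (0:ℝ) 1)) :
    IntegrableOn (fun x => (bdist x ^ ((k+1)/2) * |F x|) * (bdist x ^ ((k+1)/2) * |G x|))
      (Ioc (0:ℝ) 1)
    ∧ ∫ x in Ioc (0:ℝ) 1, (bdist x ^ ((k+1)/2) * |F x|) * (bdist x ^ ((k+1)/2) * |G x|)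
      ≤ Real.sqrt (∫ x in Ioc (0:ℝ) 1, bdist x ^ (k+1) * F x ^ 2) *
        Real.sqrt (∫ x in Ioc (0:ℝ) 1, bdist x ^ (k+1) * G x ^ 2) := by
  set μ := volume.restrict (Ioc (0:ℝ) 1) with hμ
  set f : ℝ → ℝ := fun x => bdist x ^ ((k+1)/2) * |F x| with hfdef
  set g : ℝ → ℝ := fun x => bdist x ^ ((k+1)/2) * |G x| with hgdef
  have hwc : Continuous (fun x => bdist x ^ ((k+1)/2)) :=
    continuous_bdist.rpow_const (fun x => Or.inr (by linarith))
  have hfasm : AEStronglyMeasurable f μ := by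
    refine hwc.aestronglyMeasurable.mul (hmF.norm.congr ?_)
    exact Eventually.of_forall fun x => (Real.norm_eq_abs _)
  have hgasm : AEStronglyMeasurable g μ := by
    refine hwc.aestronglyMeasurable.mul (hmG.norm.congr ?_)
    exact Eventually.of_forall fun x => (Real.norm_eq_abs _)
  have hae : ∀ᵐ x ∂μ, x ∈ Ioc (0:ℝ) 1 :=
    (ae_restrict_iff' measurableSet_Ioc).2 (Eventually.of_forall fun x hx => hx)
  have hfsq : ∀ x ∈ Ioc (0:ℝ) 1, f x ^ 2 = bdist x ^ (k+1) * F x ^ 2 := by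
    intro x hx
    rw [hfdef]
    simp only
    rw [sq_weight (k+1) hx, sq_abs]
  have hgsq : ∀ x ∈ Ioc (0:ℝ) 1, g x ^ 2 = bdist x ^ (k+1) * G x ^ 2 := by
    intro x hx
    rw [hgdef]
    simp only
    rw [sq_weight (k+1) hx, sq_abs]
  have hfint : Integrable (fun x => f x ^ 2) μ :=
    hF2.congr (by filter_upwards [hae] with x hx using (hfsq x hx).symm)
  have hgint : Integrable (fun x => g x ^ 2) μ :=
    hG2.congr (by filter_upwards [hae] with x hx using (hgsq x hx).symm)
  have hfnn : ∀ x ∈ Ioc (0:ℝ) 1, 0 ≤ f x := fun x hx =>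
    mul_nonneg (Real.rpow_nonneg (bdist_nonneg hx.1.le hx.2) _) (abs_nonneg _)
  have hgnn : ∀ x ∈ Ioc (0:ℝ) 1, 0 ≤ g x := fun x hx =>
    mul_nonneg (Real.rpow_nonneg (bdist_nonneg hx.1.le hx.2) _) (abs_nonneg _)
  constructor
  · refine Integrable.mono' (((hfint.add hgint).div_const 2)) (hfasm.mul hgasm) ?_
    filter_upwards [hae] with x hx
    have h1 := hfnn x hx; have h2 := hgnn x hx
    rw [Real.norm_eq_abs, abs_of_nonneg (mul_nonneg h1 h2)]
    simp only [Pi.add_apply]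
    nlinarith [sq_nonneg (f x - g x)]
  · have h22 : Real.HolderConjugate 2 2 := by constructor <;> norm_num
    have h2e : ENNReal.ofReal (2:ℝ) = 2 := by norm_num
    have hfM : MemLp f (ENNReal.ofReal (2:ℝ)) μ := by
      rw [h2e]
      exact (memLp_two_iff_integrable_sq hfasm).2 hfint
    have hgM : MemLp g (ENNReal.ofReal (2:ℝ)) μ := by
      rw [h2e]
      exact (memLp_two_iff_integrable_sq hgasm).2 hgint
    have hfnn' : 0 ≤ᵐ[μ] f := by filter_upwards [hae] with x hx using hfnn x hx
    have hgnn' : 0 ≤ᵐ[μ] g := by filter_upwards [hae] with x hx using hgnn x hx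
    have hH := MeasureTheory.integral_mul_le_Lp_mul_Lq_of_nonneg h22 hfnn' hgnn' hfM hgM
    have e1 : ∫ x, f x ^ (2:ℝ) ∂μ = ∫ x in Ioc (0:ℝ) 1, bdist x ^ (k+1) * F x ^ 2 := by
      refine integral_congr_ae ?_
      filter_upwards [hae] with x hx
      rw [Real.rpow_two, hfsq x hx]
    have e2 : ∫ x, g x ^ (2:ℝ) ∂μ = ∫ x in Ioc (0:ℝ) 1, bdist x ^ (k+1) * G x ^ 2 := by
      refine integral_congr_ae ?_
      filter_upwards [hae] with x hx
      rw [Real.rpow_two, hgsq x hx]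
    rw [e1, e2] at hH
    rw [Real.sqrt_eq_rpow, Real.sqrt_eq_rpow]
    exact hH

lemma reflect_weak {F G : ℝ → ℝ} (hFG : HasWeakDeriv F G) :
    HasWeakDeriv (fun x => F (1-x)) (fun x => -G (1-x)) := by
  intro a ha b hb
  have ha' : (1-a) ∈ Ioo (0:ℝ) 1 := ⟨by linarith [ha.2], by linarith [ha.1]⟩
  have hb' : (1-b) ∈ Ioo (0:ℝ) 1 := ⟨by linarith [hb.2], by linarith [hb.1]⟩
  obtain ⟨hi, he⟩ := hFG (1-a) ha' (1-b) hb'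
  constructor
  · have h2 := hi.comp_sub_left 1
    simp only [sub_sub_cancel] at h2
    exact h2.neg
  · show F (1-b) - F (1-a) = ∫ y in a..b, -G (1-y)
    rw [intervalIntegral.integral_neg, intervalIntegral.integral_comp_sub_left G 1]
    have hsym := intervalIntegral.integral_symm (a := 1-b) (b := 1-a) (f := G) (μ := volume)
    linarith [he, hsym]

lemma reflect_integrableOn {f : ℝ → ℝ} (hf : IntegrableOn f (Ioc (0:ℝ) 1)) :
    IntegrableOn (fun x => f (1-x)) (Ioc (0:ℝ) 1) := by
  have h1 : IntervalIntegrable f volume 0 1 :=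
    (intervalIntegrable_iff_integrableOn_Ioc_of_le zero_le_one).2 hf
  have h2 := h1.comp_sub_left 1
  norm_num at h2
  exact (intervalIntegrable_iff_integrableOn_Ioc_of_le zero_le_one).1 h2.symm

lemma reflect_integral (f : ℝ → ℝ) :
    ∫ x in Ioc (0:ℝ) 1, f (1-x) = ∫ x in Ioc (0:ℝ) 1, f x := by
  rw [← intervalIntegral.integral_of_le zero_le_one,
    ← intervalIntegral.integral_of_le zero_le_one]
  simpa using intervalIntegral.integral_comp_sub_left f 1


lemma abs_setIntegral_le {s : Set ℝ} (f : ℝ → ℝ) :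
    |∫ x in s, f x| ≤ ∫ x in s, |f x| := by
  have h := norm_integral_le_integral_norm (μ := volume.restrict s) f
  simpa [Real.norm_eq_abs] using h

set_option maxHeartbeats 1000000 in
lemma half (k : ℝ) (hk : -1 < k) {F G : ℝ → ℝ} (hFG : HasWeakDeriv F G)
    (hF2 : IntegrableOn (fun x => bdist x ^ (k+1) * F x ^ 2) (Ioc (0:ℝ) 1))
    (hG2 : IntegrableOn (fun x => bdist x ^ (k+1) * G x ^ 2) (Ioc (0:ℝ) 1)) :
    IntegrableOn (fun x => x ^ k * F x ^ 2) (Ioc (0:ℝ) (1/2)) ∧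
    (k+1) * ∫ x in Ioc (0:ℝ) (1/2), x ^ k * F x ^ 2 ≤
      ((1/2:ℝ) ^ (k+1) * 4 / ((1/4:ℝ) ^ (k+1)) + 2) *
        ((∫ x in Ioc (0:ℝ) 1, bdist x ^ (k+1) * F x ^ 2) +
          Real.sqrt (∫ x in Ioc (0:ℝ) 1, bdist x ^ (k+1) * F x ^ 2) *
          Real.sqrt (∫ x in Ioc (0:ℝ) 1, bdist x ^ (k+1) * G x ^ 2)) := by
  have hk1 : (0:ℝ) < k + 1 := by linarith
  set A := ∫ x in Ioc (0:ℝ) 1, bdist x ^ (k+1) * F x ^ 2 with hA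
  set B := ∫ x in Ioc (0:ℝ) 1, bdist x ^ (k+1) * G x ^ 2 with hB
  have hAnn : 0 ≤ A := setIntegral_nonneg measurableSet_Ioc fun x hx =>
    mul_nonneg (Real.rpow_nonneg (bdist_nonneg hx.1.le hx.2) _) (sq_nonneg _)
  set S := Real.sqrt A * Real.sqrt B with hS
  have hSnn : 0 ≤ S := mul_nonneg (Real.sqrt_nonneg _) (Real.sqrt_nonneg _)
  have hmF := weak_asmF hFG
  have hmG := weak_asmG hFG
  obtain ⟨hcsInt, hcsBound⟩ := cs k hk hmF hmG hF2 hG2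
  set m : ℝ := (1/4:ℝ) ^ (k+1) with hm
  have hm0 : 0 < m := Real.rpow_pos_of_pos (by norm_num) _
  have hp2 : (0:ℝ) < (1/2:ℝ) ^ (k+1) := Real.rpow_pos_of_pos (by norm_num) _
  have hcsnn : ∀ᵐ x ∂(volume.restrict (Ioc (0:ℝ) 1)),
      0 ≤ (bdist x ^ ((k+1)/2) * |F x|) * (bdist x ^ ((k+1)/2) * |G x|) := by
    refine (ae_restrict_iff' measurableSet_Ioc).2 (Eventually.of_forall fun x hx => ?_)
    have h0 := bdist_nonneg hx.1.le hx.2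
    positivity
  have hsubCS : ∀ s : Set ℝ, s ⊆ Ioc (0:ℝ) 1 →
      ∫ x in s, (bdist x ^ ((k+1)/2) * |F x|) * (bdist x ^ ((k+1)/2) * |G x|) ≤ S := by
    intro s hsub
    refine le_trans (setIntegral_mono_set hcsInt hcsnn hsub.eventuallyLE) hcsBound
  -- pointwise identity on (0, 1/2]
  have hpt : ∀ x ∈ Ioc (0:ℝ) (1/2:ℝ), |F x| * |G x| * (bdist x ^ (k+1))
      = (bdist x ^ ((k+1)/2) * |F x|) * (bdist x ^ ((k+1)/2) * |G x|) := by
    intro x hx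
    have h0 : 0 ≤ bdist x := bdist_nonneg hx.1.le (le_trans hx.2 (by norm_num))
    have hxx : bdist x ^ ((k+1)/2) * bdist x ^ ((k+1)/2) = bdist x ^ (k+1) := by
      rw [← Real.rpow_add' h0 (by intro hcon; linarith)]
      congr 1; ring
    calc |F x| * |G x| * (bdist x ^ (k+1))
        = (bdist x ^ ((k+1)/2) * bdist x ^ ((k+1)/2)) * (|F x| * |G x|) := by
          rw [hxx]; ring
      _ = (bdist x ^ ((k+1)/2) * |F x|) * (bdist x ^ ((k+1)/2) * |G x|) := by ring
  -- the bulk term bound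
  have hbulk : ∀ c, 0 < c → c ≤ 1/2 →
      |∫ x in Ioc c (1/2:ℝ), x ^ (k+1) * (2 * F x * G x)| ≤ 2 * S := by
    intro c hc0 hc2
    have hsub' : Ioc c (1/2:ℝ) ⊆ Ioc (0:ℝ) 1 := fun x hx =>
      ⟨hc0.trans hx.1, hx.2.trans (by norm_num)⟩
    have hptc : ∀ x ∈ Ioc c (1/2:ℝ), |x ^ (k+1) * (2 * F x * G x)|
        = 2 * ((bdist x ^ ((k+1)/2) * |F x|) * (bdist x ^ ((k+1)/2) * |G x|)) := by
      intro x hx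
      have hx0 : 0 < x := hc0.trans hx.1
      have hbd : bdist x = x := bdist_eq_left hx.2
      have h2 := hpt x ⟨hx0, hx.2⟩
      rw [hbd] at h2
      rw [abs_mul, abs_of_nonneg (Real.rpow_nonneg hx0.le _), abs_mul, abs_mul, abs_two, hbd]
      linear_combination 2 * h2
    have hIntc : IntegrableOn
        (fun x => (bdist x ^ ((k+1)/2) * |F x|) * (bdist x ^ ((k+1)/2) * |G x|))
        (Ioc c (1/2:ℝ)) := hcsInt.mono_set hsub'
    calc |∫ x in Ioc c (1/2:ℝ), x ^ (k+1) * (2 * F x * G x)|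
        ≤ ∫ x in Ioc c (1/2:ℝ), |x ^ (k+1) * (2 * F x * G x)| :=
          abs_setIntegral_le _
      _ = ∫ x in Ioc c (1/2:ℝ),
            2 * ((bdist x ^ ((k+1)/2) * |F x|) * (bdist x ^ ((k+1)/2) * |G x|)) :=
          setIntegral_congr_fun measurableSet_Ioc hptc
      _ = 2 * ∫ x in Ioc c (1/2:ℝ),
            (bdist x ^ ((k+1)/2) * |F x|) * (bdist x ^ ((k+1)/2) * |G x|) :=
          MeasureTheory.integral_const_mul 2 _
      _ ≤ 2 * S := by linarith [hsubCS (Ioc c (1/2:ℝ)) hsub']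
  -- bound on F(1/2)^2
  have hhalfmem : (1/2 : ℝ) ∈ Ioo (0:ℝ) 1 := by norm_num
  have hqmem : (1/4 : ℝ) ∈ Ioo (0:ℝ) 1 := by norm_num
  have hFc : ContinuousOn F (Icc (1/4:ℝ) (1/2)) :=
    weak_continuousOn hFG hqmem hhalfmem (by norm_num)
  have hFsqc : ContinuousOn (fun x => F x ^ 2) (Icc (1/4:ℝ) (1/2)) := hFc.pow 2
  obtain ⟨y₀, hy₀mem, hy₀min⟩ := isCompact_Icc.exists_isMinOn
    (Set.nonempty_Icc.mpr (by norm_num)) hFsqc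
  have hIntF2q : IntegrableOn (fun x => F x ^ 2) (Ioc (1/4:ℝ) (1/2)) :=
    (hFsqc.integrableOn_Icc).mono_set Ioc_subset_Icc_self
  set Iq := ∫ x in Ioc (1/4:ℝ) (1/2), F x ^ 2 with hIq
  have hmin : F y₀ ^ 2 * (1/4) ≤ Iq := by
    have h1 : ∫ _x in Ioc (1/4:ℝ) (1/2), F y₀ ^ 2 ≤ Iq := by
      refine setIntegral_mono_on (integrableOn_const (by simp) (by simp)) hIntF2q
        measurableSet_Ioc fun x hx => hy₀min (Ioc_subset_Icc_self hx)
    rw [setIntegral_const, measureReal_def, Real.volume_Ioc, ENNReal.toReal_ofReal (by norm_num),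
      smul_eq_mul] at h1
    nlinarith [h1]
  have hwge : ∀ x ∈ Ioc (1/4:ℝ) (1/2), m ≤ bdist x ^ (k+1) := by
    intro x hx
    rw [bdist_eq_left hx.2, hm]
    exact Real.rpow_le_rpow (by norm_num) hx.1.le hk1.le
  have hqA : m * Iq ≤ A := by
    have hsub4 : Ioc (1/4:ℝ) (1/2) ⊆ Ioc (0:ℝ) 1 := fun x hx =>
      ⟨lt_trans (by norm_num) hx.1, hx.2.trans (by norm_num)⟩
    have h2 : ∫ x in Ioc (1/4:ℝ) (1/2), m * F x ^ 2
        ≤ ∫ x in Ioc (1/4:ℝ) (1/2), bdist x ^ (k+1) * F x ^ 2 := by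
      refine setIntegral_mono_on (hIntF2q.const_mul m) (hF2.mono_set hsub4)
        measurableSet_Ioc fun x hx => ?_
      exact mul_le_mul_of_nonneg_right (hwge x hx) (sq_nonneg _)
    have h3 : ∫ x in Ioc (1/4:ℝ) (1/2), bdist x ^ (k+1) * F x ^ 2 ≤ A := by
      refine setIntegral_mono_set hF2 ?_ hsub4.eventuallyLE
      refine (ae_restrict_iff' measurableSet_Ioc).2 (Eventually.of_forall fun x hx => ?_)
      exact mul_nonneg (Real.rpow_nonneg (bdist_nonneg hx.1.le hx.2) _) (sq_nonneg _)
    rw [MeasureTheory.integral_const_mul] at h2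
    linarith
  have hy₀Ioo : y₀ ∈ Ioo (0:ℝ) 1 := ⟨by linarith [hy₀mem.1], by linarith [hy₀mem.2]⟩
  have hFid := (sq_weakDeriv hFG y₀ hy₀Ioo (1/2) hhalfmem).2
  simp only at hFid
  set I2 := ∫ y in y₀..(1/2:ℝ), 2 * F y * G y with hI2
  have hIntFG : IntegrableOn (fun y => 2 * F y * G y) (Ioc y₀ (1/2:ℝ)) :=
    (intervalIntegrable_iff_integrableOn_Ioc_of_le hy₀mem.2).1
      (sq_weakDeriv hFG y₀ hy₀Ioo (1/2) hhalfmem).1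
  have hFGq : m * |I2| ≤ 2 * S := by
    have hsuby : Ioc y₀ (1/2:ℝ) ⊆ Ioc (1/4:ℝ) (1/2) := Ioc_subset_Ioc hy₀mem.1 le_rfl
    have hsub1 : Ioc y₀ (1/2:ℝ) ⊆ Ioc (0:ℝ) 1 := fun x hx =>
      ⟨lt_of_le_of_lt (by norm_num : (0:ℝ) ≤ 1/4) (hsuby hx).1, hx.2.trans (by norm_num)⟩
    have hptm : ∀ x ∈ Ioc y₀ (1/2:ℝ), m * |2 * F x * G x|
        ≤ 2 * ((bdist x ^ ((k+1)/2) * |F x|) * (bdist x ^ ((k+1)/2) * |G x|)) := by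
      intro x hx
      have hxq := hsuby hx
      have h1 : m ≤ bdist x ^ (k+1) := hwge x hxq
      have h2 := hpt x ⟨lt_trans (by norm_num) hxq.1, hx.2⟩
      rw [abs_mul, abs_mul, abs_two, ← h2]
      have habs : (0:ℝ) ≤ |F x| * |G x| := mul_nonneg (abs_nonneg _) (abs_nonneg _)
      nlinarith [habs, h1]
    have hstep : m * |I2| ≤ ∫ x in Ioc y₀ (1/2:ℝ),
        2 * ((bdist x ^ ((k+1)/2) * |F x|) * (bdist x ^ ((k+1)/2) * |G x|)) := by
      have e0 : I2 = ∫ x in Ioc y₀ (1/2:ℝ), 2 * F x * G x :=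
        intervalIntegral.integral_of_le hy₀mem.2
      have e1 : |I2| ≤ ∫ x in Ioc y₀ (1/2:ℝ), |2 * F x * G x| := by
        rw [e0]; exact abs_setIntegral_le _
      have e2 : ∫ x in Ioc y₀ (1/2:ℝ), m * |2 * F x * G x| ≤ ∫ x in Ioc y₀ (1/2:ℝ),
          2 * ((bdist x ^ ((k+1)/2) * |F x|) * (bdist x ^ ((k+1)/2) * |G x|)) := by
        refine setIntegral_mono_on ((hIntFG.abs).const_mul m)
          ((hcsInt.mono_set hsub1).const_mul 2) measurableSet_Ioc hptm
      rw [MeasureTheory.integral_const_mul] at e2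
      have e3 : 0 ≤ ∫ x in Ioc y₀ (1/2:ℝ), |2 * F x * G x| :=
        setIntegral_nonneg measurableSet_Ioc fun x _ => abs_nonneg _
      nlinarith [e1, e2, e3, hm0]
    have hfin : ∫ x in Ioc y₀ (1/2:ℝ),
        2 * ((bdist x ^ ((k+1)/2) * |F x|) * (bdist x ^ ((k+1)/2) * |G x|)) ≤ 2 * S := by
      rw [MeasureTheory.integral_const_mul]
      linarith [hsubCS (Ioc y₀ (1/2:ℝ)) hsub1]
    linarith
  have hFhalfm : m * F (1/2:ℝ) ^ 2 ≤ 4 * A + 2 * S := by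
    have h1 : F (1/2:ℝ) ^ 2 = F y₀ ^ 2 + I2 := by linarith [hFid]
    have h2 : I2 ≤ |I2| := le_abs_self _
    nlinarith [hmin, hqA, hFGq, hm0, sq_nonneg (F y₀)]
  -- the main estimate for each cut c
  have hmain : ∀ c, 0 < c → c ≤ 1/2 →
      (k+1) * ∫ x in Ioc c (1/2:ℝ), x ^ k * F x ^ 2
        ≤ (1/2:ℝ) ^ (k+1) * F (1/2:ℝ) ^ 2 + 2 * S := by
    intro c hc0 hc2
    have hcmem : c ∈ Ioo (0:ℝ) 1 := ⟨hc0, by linarith⟩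
    have hvC : ContinuousOn (fun x => (k+1) * x ^ k) (Icc c (1/2:ℝ)) := by
      refine continuousOn_const.mul (fun x hx => ContinuousAt.continuousWithinAt ?_)
      exact Real.continuousAt_rpow_const x k (Or.inl (ne_of_gt (lt_of_lt_of_le hc0 hx.1)))
    have hwD : ∀ x ∈ Icc c (1/2:ℝ), HasDerivAt (fun x => x ^ (k+1)) ((k+1) * x ^ k) x := by
      intro x hx
      have h := Real.hasDerivAt_rpow_const
        (x := x) (p := k+1) (Or.inl (ne_of_gt (lt_of_lt_of_le hc0 hx.1)))
      rwa [show k + 1 - 1 = k from by ring] at h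
    have hFTC := wFTC hcmem hhalfmem hc2 (sq_weakDeriv hFG) hvC hwD
    have hLHS : ∫ x in Ioc c (1/2:ℝ), (k+1) * x ^ k * F x ^ 2
        = (k+1) * ∫ x in Ioc c (1/2:ℝ), x ^ k * F x ^ 2 := by
      rw [← MeasureTheory.integral_const_mul]
      refine setIntegral_congr_fun measurableSet_Ioc fun x hx => ?_
      ring
    rw [hLHS] at hFTC
    have hcpos : 0 ≤ c ^ (k+1) * F c ^ 2 :=
      mul_nonneg (Real.rpow_nonneg hc0.le _) (sq_nonneg _)
    have hb := hbulk c hc0 hc2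
    have habs := abs_le.1 hb
    linarith [hFTC, hcpos, habs.1, habs.2]
  -- integrability up to 0
  have hseq : ∀ n : ℕ, 0 < (1/((n:ℝ)+3)) ∧ (1/((n:ℝ)+3)) ≤ 1/2 := by
    intro n
    have hn0 : (0:ℝ) ≤ (n:ℝ) := Nat.cast_nonneg n
    exact ⟨by positivity, one_div_le_one_div_of_le (by norm_num) (by linarith)⟩
  have htend : Tendsto (fun n : ℕ => 1/((n:ℝ)+3)) atTop (nhds 0) := by
    have h1 : Tendsto (fun n : ℕ => ((n:ℝ)+3)) atTop atTop :=
      tendsto_atTop_add_const_right _ _ tendsto_natCast_atTop_atTop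
    have h2 := h1.inv_tendsto_atTop
    exact h2.congr (fun n => by simp [one_div])
  have hicont : ∀ c, 0 < c → IntegrableOn (fun x => x ^ k * F x ^ 2) (Ioc c (1/2:ℝ)) := by
    intro c hc0
    rcases le_or_gt c (1/2:ℝ) with hc2 | hc2
    · have hcmem : c ∈ Ioo (0:ℝ) 1 := ⟨hc0, by linarith⟩
      have hFcc : ContinuousOn F (Icc c (1/2:ℝ)) :=
        weak_continuousOn hFG hcmem hhalfmem hc2
      have : ContinuousOn (fun x => x ^ k * F x ^ 2) (Icc c (1/2:ℝ)) := by
        refine ContinuousOn.mul (fun x hx => ContinuousAt.continuousWithinAt ?_) (hFcc.pow 2)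
        exact Real.continuousAt_rpow_const x k (Or.inl (ne_of_gt (lt_of_lt_of_le hc0 hx.1)))
      exact this.integrableOn_Icc.mono_set Ioc_subset_Icc_self
    · rw [Ioc_eq_empty (by linarith)]
      exact integrableOn_empty
  set Mtot := ((1/2:ℝ) ^ (k+1) * F (1/2:ℝ) ^ 2 + 2 * S) / (k+1) with hMtot
  have hnorm : ∀ c, 0 < c → ∫ x in Ioc c (1/2:ℝ), ‖x ^ k * F x ^ 2‖ ≤ Mtot := by
    intro c hc0
    rcases le_or_gt c (1/2:ℝ) with hc2 | hc2
    · have he : ∫ x in Ioc c (1/2:ℝ), ‖x ^ k * F x ^ 2‖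
          = ∫ x in Ioc c (1/2:ℝ), x ^ k * F x ^ 2 := by
        refine setIntegral_congr_fun measurableSet_Ioc fun x hx => ?_
        rw [Real.norm_eq_abs, abs_of_nonneg]
        exact mul_nonneg (Real.rpow_nonneg (hc0.trans hx.1).le _) (sq_nonneg _)
      rw [he, hMtot, le_div_iff₀ hk1]
      have := hmain c hc0 hc2
      linarith
    · rw [Ioc_eq_empty (not_lt.2 hc2.le)]
      simp only [Measure.restrict_empty, integral_zero_measure, hMtot]
      refine div_nonneg ?_ hk1.le
      nlinarith [hp2, hSnn, sq_nonneg (F (1/2:ℝ))]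
  have hInt : IntegrableOn (fun x => x ^ k * F x ^ 2) (Ioc (0:ℝ) (1/2)) := by
    refine integrableOn_Ioc_of_intervalIntegral_norm_bounded_left
      (a := fun n : ℕ => 1/((n:ℝ)+3)) (I := Mtot) (fun n => hicont _ (hseq n).1) htend ?_
    exact Eventually.of_forall fun n => hnorm _ (hseq n).1
  refine ⟨hInt, ?_⟩
  have hUnion : (⋃ n : ℕ, Ioc (1/((n:ℝ)+3)) (1/2:ℝ)) = Ioc (0:ℝ) (1/2) := by
    ext x
    simp only [mem_iUnion, mem_Ioc]
    constructor
    · rintro ⟨n, h1, h2⟩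
      exact ⟨lt_trans (hseq n).1 h1, h2⟩
    · rintro ⟨h1, h2⟩
      obtain ⟨n, hn⟩ := exists_nat_gt (1/x)
      have hn1 := (div_lt_iff₀ h1).mp hn
      have hn0 : (0:ℝ) ≤ (n:ℝ) := Nat.cast_nonneg n
      refine ⟨n, ?_, h2⟩
      rw [div_lt_iff₀ (by positivity)]
      nlinarith [h1]
  have hmono : Monotone (fun n : ℕ => Ioc (1/((n:ℝ)+3)) (1/2:ℝ)) := by
    intro i j hij
    apply Ioc_subset_Ioc _ le_rfl
    apply one_div_le_one_div_of_le (by positivity)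
    have : (i:ℝ) ≤ (j:ℝ) := Nat.cast_le.2 hij
    linarith
  have hIntU : IntegrableOn (fun x => x ^ k * F x ^ 2)
      (⋃ n : ℕ, Ioc (1/((n:ℝ)+3)) (1/2:ℝ)) := by
    rw [hUnion]; exact hInt
  have htendInt := tendsto_setIntegral_of_monotone (fun n : ℕ => measurableSet_Ioc) hmono hIntU
  rw [hUnion] at htendInt
  have hlim : ∫ x in Ioc (0:ℝ) (1/2), x ^ k * F x ^ 2 ≤ Mtot := by
    refine le_of_tendsto htendInt (Eventually.of_forall fun n => ?_)
    refine le_trans ?_ (hnorm _ (hseq n).1)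
    refine setIntegral_mono_on (hicont _ (hseq n).1) ((hicont _ (hseq n).1).norm)
      measurableSet_Ioc fun x hx => ?_
    rw [Real.norm_eq_abs]
    exact le_abs_self _
  have hfinal : (k+1) * ∫ x in Ioc (0:ℝ) (1/2), x ^ k * F x ^ 2
      ≤ (1/2:ℝ) ^ (k+1) * F (1/2:ℝ) ^ 2 + 2 * S := by
    have h1 := mul_le_mul_of_nonneg_left hlim hk1.le
    rw [hMtot, mul_div_cancel₀ _ (ne_of_gt hk1)] at h1
    exact h1
  have hgoal : m * ((k+1) * ∫ x in Ioc (0:ℝ) (1/2), x ^ k * F x ^ 2)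
      ≤ m * (((1/2:ℝ) ^ (k+1) * 4 / m + 2) * (A + S)) := by
    have hrhs : m * (((1/2:ℝ) ^ (k+1) * 4 / m + 2) * (A + S))
        = ((1/2:ℝ) ^ (k+1) * 4 + 2 * m) * (A + S) := by
      field_simp
    rw [hrhs]
    nlinarith [mul_le_mul_of_nonneg_left hfinal hm0.le,
      mul_le_mul_of_nonneg_left hFhalfm hp2.le,
      mul_nonneg hm0.le hAnn, mul_nonneg hp2.le hSnn, mul_nonneg hm0.le hSnn,
      mul_nonneg hp2.le hAnn]
  exact le_of_mul_le_mul_left hgoal hm0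

set_option maxHeartbeats 1000000 in
lemma key (k : ℝ) (hk : -1 < k) {F G : ℝ → ℝ} (hFG : HasWeakDeriv F G)
    (hF2 : IntervalIntegrable (fun x => (bdist x ^ ((k + 1)/2) * F x) ^ 2) volume 0 1)
    (hG2 : IntervalIntegrable (fun x => (bdist x ^ ((k + 1)/2) * G x) ^ 2) volume 0 1) :
    IntervalIntegrable (fun x => (bdist x ^ (k/2) * F x) ^ 2) volume 0 1 ∧
      wL2 (fun x => bdist x ^ (k/2)) F ≤
        Real.sqrt (2 * ((1/2:ℝ) ^ (k+1) * 4 / ((1/4:ℝ) ^ (k+1)) + 2) / (k+1)) *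
          (wL2 (fun x => bdist x ^ ((k + 1)/2)) F +
            wL2 (fun x => bdist x ^ ((k + 1)/2)) F ^ ((1:ℝ)/2) *
              wL2 (fun x => bdist x ^ ((k + 1)/2)) G ^ ((1:ℝ)/2)) := by
  have hk1 : (0:ℝ) < k + 1 := by linarith
  set C0 : ℝ := (1/2:ℝ) ^ (k+1) * 4 / ((1/4:ℝ) ^ (k+1)) + 2 with hC0
  have hC0pos : 0 < C0 := by
    have h1 : (0:ℝ) < (1/2:ℝ) ^ (k+1) := Real.rpow_pos_of_pos (by norm_num) _
    have h2 : (0:ℝ) < (1/4:ℝ) ^ (k+1) := Real.rpow_pos_of_pos (by norm_num) _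
    have h3 := div_pos (by linarith : (0:ℝ) < (1/2:ℝ) ^ (k+1) * 4) h2
    rw [hC0]
    linarith
  -- convert hypotheses to set-integrable form
  have haeIoc : ∀ᵐ x ∂(volume.restrict (Ioc (0:ℝ) 1)), x ∈ Ioc (0:ℝ) 1 :=
    (ae_restrict_iff' measurableSet_Ioc).2 (Eventually.of_forall fun x hx => hx)
  have hF2on : IntegrableOn (fun x => bdist x ^ (k+1) * F x ^ 2) (Ioc (0:ℝ) 1) := by
    refine ((intervalIntegrable_iff_integrableOn_Ioc_of_le zero_le_one).1 hF2).congr ?_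
    filter_upwards [haeIoc] with x hx
    exact sq_weight (k+1) hx _
  have hG2on : IntegrableOn (fun x => bdist x ^ (k+1) * G x ^ 2) (Ioc (0:ℝ) 1) := by
    refine ((intervalIntegrable_iff_integrableOn_Ioc_of_le zero_le_one).1 hG2).congr ?_
    filter_upwards [haeIoc] with x hx
    exact sq_weight (k+1) hx _
  set A := ∫ x in Ioc (0:ℝ) 1, bdist x ^ (k+1) * F x ^ 2 with hA
  set B := ∫ x in Ioc (0:ℝ) 1, bdist x ^ (k+1) * G x ^ 2 with hB
  have hAnn : 0 ≤ A := setIntegral_nonneg measurableSet_Ioc fun x hx =>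
    mul_nonneg (Real.rpow_nonneg (bdist_nonneg hx.1.le hx.2) _) (sq_nonneg _)
  have hBnn : 0 ≤ B := setIntegral_nonneg measurableSet_Ioc fun x hx =>
    mul_nonneg (Real.rpow_nonneg (bdist_nonneg hx.1.le hx.2) _) (sq_nonneg _)
  set S := Real.sqrt A * Real.sqrt B with hS
  have hSnn : 0 ≤ S := mul_nonneg (Real.sqrt_nonneg _) (Real.sqrt_nonneg _)
  -- wL2 identities
  have hwF : wL2 (fun x => bdist x ^ ((k + 1)/2)) F = Real.sqrt A := by
    unfold wL2
    congr 1
    rw [intervalIntegral.integral_of_le zero_le_one]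
    exact setIntegral_congr_fun measurableSet_Ioc fun x hx => sq_weight (k+1) hx _
  have hwG : wL2 (fun x => bdist x ^ ((k + 1)/2)) G = Real.sqrt B := by
    unfold wL2
    congr 1
    rw [intervalIntegral.integral_of_le zero_le_one]
    exact setIntegral_congr_fun measurableSet_Ioc fun x hx => sq_weight (k+1) hx _
  -- left half
  obtain ⟨hIntL, hBoundL⟩ := half k hk hFG hF2on hG2on
  -- reflected data
  have hFG' := reflect_weak hFG
  have hF2r : IntegrableOn (fun x => bdist x ^ (k+1) * (F (1-x)) ^ 2) (Ioc (0:ℝ) 1) := by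
    refine (reflect_integrableOn hF2on).congr ?_
    filter_upwards [haeIoc] with x _
    simp only [bdist_reflect]
  have hG2r : IntegrableOn (fun x => bdist x ^ (k+1) * (-G (1-x)) ^ 2) (Ioc (0:ℝ) 1) := by
    refine (reflect_integrableOn hG2on).congr ?_
    filter_upwards [haeIoc] with x _
    simp only [bdist_reflect, neg_sq]
  obtain ⟨hIntR, hBoundR⟩ := half k hk hFG' hF2r hG2r
  have hAr : ∫ x in Ioc (0:ℝ) 1, bdist x ^ (k+1) * (F (1-x)) ^ 2 = A := by
    rw [hA, ← reflect_integral (fun y => bdist y ^ (k+1) * F y ^ 2)]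
    refine setIntegral_congr_fun measurableSet_Ioc fun x _ => ?_
    simp only [bdist_reflect]
  have hBr : ∫ x in Ioc (0:ℝ) 1, bdist x ^ (k+1) * (-G (1-x)) ^ 2 = B := by
    rw [hB, ← reflect_integral (fun y => bdist y ^ (k+1) * G y ^ 2)]
    refine setIntegral_congr_fun measurableSet_Ioc fun x _ => ?_
    simp only [bdist_reflect, neg_sq]
  rw [hAr, hBr] at hBoundR
  -- transport pieces to the bdist weight
  have hIntLeftB : IntegrableOn (fun x => bdist x ^ k * F x ^ 2) (Ioc (0:ℝ) (1/2)) := by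
    refine hIntL.congr ((ae_restrict_iff' measurableSet_Ioc).2
      (Eventually.of_forall fun x hx => ?_))
    show x ^ k * F x ^ 2 = bdist x ^ k * F x ^ 2
    rw [bdist_eq_left hx.2]
  have hIntRightB : IntegrableOn (fun x => bdist x ^ k * F x ^ 2) (Ioc (1/2:ℝ) 1) := by
    have h1 : IntervalIntegrable (fun u => u ^ k * (F (1-u)) ^ 2) volume 0 (1/2) :=
      (intervalIntegrable_iff_integrableOn_Ioc_of_le (by norm_num)).2 hIntR
    have h2 := h1.comp_sub_left 1
    norm_num at h2
    have h3 : IntegrableOn (fun x => (1-x) ^ k * F x ^ 2) (Ioc (1/2:ℝ) 1) :=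
      (intervalIntegrable_iff_integrableOn_Ioc_of_le (by norm_num)).1 h2.symm
    refine h3.congr ((ae_restrict_iff' measurableSet_Ioc).2
      (Eventually.of_forall fun x hx => ?_))
    show (1-x) ^ k * F x ^ 2 = bdist x ^ k * F x ^ 2
    rw [bdist_eq_right hx.1.le]
  have hIL : ∫ x in Ioc (0:ℝ) (1/2), bdist x ^ k * F x ^ 2
      = ∫ x in Ioc (0:ℝ) (1/2), x ^ k * F x ^ 2 :=
    setIntegral_congr_fun measurableSet_Ioc fun x hx => by rw [bdist_eq_left hx.2]
  have hIR : ∫ x in Ioc (1/2:ℝ) 1, bdist x ^ k * F x ^ 2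
      = ∫ u in Ioc (0:ℝ) (1/2), u ^ k * (F (1-u)) ^ 2 := by
    rw [← intervalIntegral.integral_of_le (by norm_num : (1/2:ℝ) ≤ 1),
      ← intervalIntegral.integral_of_le (by norm_num : (0:ℝ) ≤ 1/2)]
    have hcs := intervalIntegral.integral_comp_sub_left
      (a := (1/2:ℝ)) (b := 1) (fun u => u ^ k * (F (1-u)) ^ 2) 1
    norm_num at hcs
    rw [← hcs]
    refine intervalIntegral.integral_congr fun x hx => ?_
    rw [uIcc_of_le (by norm_num : (1/2:ℝ) ≤ 1)] at hx
    show bdist x ^ k * F x ^ 2 = (1-x) ^ k * F x ^ 2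
    rw [bdist_eq_right hx.1]
  -- total
  have hTon : IntegrableOn (fun x => bdist x ^ k * F x ^ 2) (Ioc (0:ℝ) 1) := by
    have := hIntLeftB.union hIntRightB
    rwa [Ioc_union_Ioc_eq_Ioc (by norm_num) (by norm_num)] at this
  set T := ∫ x in Ioc (0:ℝ) 1, bdist x ^ k * F x ^ 2 with hT
  have hTsplit : T = (∫ x in Ioc (0:ℝ) (1/2), bdist x ^ k * F x ^ 2)
      + ∫ x in Ioc (1/2:ℝ) 1, bdist x ^ k * F x ^ 2 := by
    rw [hT, ← Ioc_union_Ioc_eq_Ioc (by norm_num : (0:ℝ) ≤ 1/2) (by norm_num : (1/2:ℝ) ≤ 1),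
      setIntegral_union (Ioc_disjoint_Ioc_of_le le_rfl) measurableSet_Ioc hIntLeftB hIntRightB]
  have hTbound : T ≤ 2 * C0 / (k+1) * (A + S) := by
    have h1 : (k+1) * T ≤ 2 * C0 * (A + S) := by
      have hL' : (k+1) * ∫ x in Ioc (0:ℝ) (1/2), x ^ k * F x ^ 2 ≤ C0 * (A + S) := by
        rw [hC0, hS, hA, hB]
        exact hBoundL
      have hR' : (k+1) * ∫ x in Ioc (0:ℝ) (1/2), x ^ k * (F (1-x)) ^ 2 ≤ C0 * (A + S) := by
        rw [hC0, hS]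
        exact hBoundR
      rw [hTsplit, hIL, hIR]
      linarith [hL', hR']
    rw [div_mul_eq_mul_div, le_div_iff₀ hk1]
    linarith
  -- first part: interval integrability
  have hIcc : IntervalIntegrable (fun x => (bdist x ^ (k/2) * F x) ^ 2) volume 0 1 := by
    refine (intervalIntegrable_iff_integrableOn_Ioc_of_le zero_le_one).2 (hTon.congr ?_)
    filter_upwards [haeIoc] with x hx
    exact (sq_weight k hx _).symm
  refine ⟨hIcc, ?_⟩
  -- wL2 bound
  have hwT : wL2 (fun x => bdist x ^ (k/2)) F = Real.sqrt T := by
    unfold wL2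
    congr 1
    rw [intervalIntegral.integral_of_le zero_le_one]
    exact setIntegral_congr_fun measurableSet_Ioc fun x hx => sq_weight k hx _
  rw [hwT, hwF, hwG]
  have hco : (0:ℝ) ≤ 2 * C0 / (k+1) := by positivity
  have step1 : Real.sqrt T ≤ Real.sqrt (2 * C0 / (k+1) * (A + S)) :=
    Real.sqrt_le_sqrt hTbound
  have step2 : Real.sqrt (2 * C0 / (k+1) * (A + S))
      = Real.sqrt (2 * C0 / (k+1)) * Real.sqrt (A + S) := Real.sqrt_mul hco _
  have step3 : Real.sqrt (A + S) ≤ Real.sqrt A + Real.sqrt S := by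
    have hsum : A + S ≤ (Real.sqrt A + Real.sqrt S) ^ 2 := by
      nlinarith [Real.sq_sqrt hAnn, Real.sq_sqrt hSnn, Real.sqrt_nonneg A,
        Real.sqrt_nonneg S, mul_nonneg (Real.sqrt_nonneg A) (Real.sqrt_nonneg S)]
    calc Real.sqrt (A + S) ≤ Real.sqrt ((Real.sqrt A + Real.sqrt S) ^ 2) :=
          Real.sqrt_le_sqrt hsum
      _ = Real.sqrt A + Real.sqrt S :=
          Real.sqrt_sq (add_nonneg (Real.sqrt_nonneg _) (Real.sqrt_nonneg _))
  have step4 : Real.sqrt S = Real.sqrt A ^ ((1:ℝ)/2) * Real.sqrt B ^ ((1:ℝ)/2) := by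
    rw [hS, Real.sqrt_mul (Real.sqrt_nonneg A), Real.sqrt_eq_rpow (Real.sqrt A), Real.sqrt_eq_rpow (Real.sqrt B)]
  calc Real.sqrt T ≤ Real.sqrt (2 * C0 / (k+1)) * Real.sqrt (A + S) := by
        rw [← step2]; exact step1
    _ ≤ Real.sqrt (2 * C0 / (k+1)) *
        (Real.sqrt A + Real.sqrt A ^ ((1:ℝ)/2) * Real.sqrt B ^ ((1:ℝ)/2)) := by
        refine mul_le_mul_of_nonneg_left ?_ (Real.sqrt_nonneg _)
        rw [← step4]
        exact step3

end WII


/-- Lemma A.3: weighted interpolation inequality with the boundary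
distance weight `d(x) = min(x,1-x)`, together with its Young-inequality consequence. -/
theorem weighted_interpolation_inequality (k : ℝ) (hk : -1 < k) :
    (∃ C > (0:ℝ), ∀ F G : ℝ → ℝ, HasWeakDeriv F G →
      IntervalIntegrable (fun x => (bdist x ^ ((k + 1)/2) * F x) ^ 2) volume 0 1 →
      IntervalIntegrable (fun x => (bdist x ^ ((k + 1)/2) * G x) ^ 2) volume 0 1 →
      IntervalIntegrable (fun x => (bdist x ^ (k/2) * F x) ^ 2) volume 0 1 ∧
        wL2 (fun x => bdist x ^ (k/2)) F ≤
          C * (wL2 (fun x => bdist x ^ ((k + 1)/2)) F +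
            wL2 (fun x => bdist x ^ ((k + 1)/2)) F ^ ((1:ℝ)/2) *
              wL2 (fun x => bdist x ^ ((k + 1)/2)) G ^ ((1:ℝ)/2))) ∧
    (∀ ε ∈ Ioo (0:ℝ) 1, ∃ C > (0:ℝ), ∀ F G : ℝ → ℝ, HasWeakDeriv F G →
      IntervalIntegrable (fun x => (bdist x ^ ((k + 1)/2) * F x) ^ 2) volume 0 1 →
      IntervalIntegrable (fun x => (bdist x ^ ((k + 1)/2) * G x) ^ 2) volume 0 1 →
      wL2 (fun x => bdist x ^ (k/2)) F ≤
        C * wL2 (fun x => bdist x ^ ((k + 1)/2)) F +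
          ε * wL2 (fun x => bdist x ^ ((k + 1)/2)) G) := by
  have hk1 : (0:ℝ) < k + 1 := by linarith
  set Cs : ℝ := Real.sqrt (2 * ((1/2:ℝ) ^ (k+1) * 4 / ((1/4:ℝ) ^ (k+1)) + 2) / (k+1)) with hCs
  have hCspos : 0 < Cs := by
    rw [hCs]
    apply Real.sqrt_pos.2
    have h1 : (0:ℝ) < (1/2:ℝ) ^ (k+1) := Real.rpow_pos_of_pos (by norm_num) _
    have h2 : (0:ℝ) < (1/4:ℝ) ^ (k+1) := Real.rpow_pos_of_pos (by norm_num) _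
    have h3 := div_pos (by linarith : (0:ℝ) < (1/2:ℝ) ^ (k+1) * 4) h2
    exact div_pos (by linarith) hk1
  constructor
  · exact ⟨Cs, hCspos, fun F G hFG hF2 hG2 => WII.key k hk hFG hF2 hG2⟩
  · intro ε hε
    have hε0 : 0 < ε := hε.1
    refine ⟨Cs + Cs^2/(4*ε), ?_, fun F G hFG hF2 hG2 => ?_⟩
    · have h1 : 0 < Cs^2/(4*ε) := div_pos (by positivity) (by linarith)
      linarith
    · obtain ⟨-, hle⟩ := WII.key k hk hFG hF2 hG2
      set wF := wL2 (fun x => bdist x ^ ((k + 1)/2)) F with hwF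
      set wG := wL2 (fun x => bdist x ^ ((k + 1)/2)) G with hwG
      have hwFnn : 0 ≤ wF := Real.sqrt_nonneg _
      have hwGnn : 0 ≤ wG := Real.sqrt_nonneg _
      set s := wF ^ ((1:ℝ)/2) with hs
      set u := wG ^ ((1:ℝ)/2) with hu
      have hsnn : 0 ≤ s := Real.rpow_nonneg hwFnn _
      have hunn : 0 ≤ u := Real.rpow_nonneg hwGnn _
      have hs2 : s ^ 2 = wF := by
        rw [hs, ← Real.rpow_natCast (wF ^ ((1:ℝ)/2)) 2, ← Real.rpow_mul hwFnn]
        norm_num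
      have hu2 : u ^ 2 = wG := by
        rw [hu, ← Real.rpow_natCast (wG ^ ((1:ℝ)/2)) 2, ← Real.rpow_mul hwGnn]
        norm_num
      have hyoung : Cs * (s * u) ≤ Cs^2/(4*ε) * wF + ε * wG := by
        rw [← hs2, ← hu2]
        have h4 : (0:ℝ) < 4*ε := by linarith
        rw [← mul_le_mul_iff_of_pos_left h4]
        have e : (4*ε)*(Cs^2/(4*ε)*s^2 + ε*u^2) = Cs^2*s^2 + 4*ε^2*u^2 := by
          field_simp
        rw [e]
        nlinarith [sq_nonneg (Cs*s - 2*ε*u)]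
      calc wL2 (fun x => bdist x ^ (k/2)) F ≤ Cs * (wF + s * u) := hle
        _ = Cs * wF + Cs * (s*u) := by ring
        _ ≤ Cs * wF + (Cs^2/(4*ε) * wF + ε * wG) := by linarith
        _ = (Cs + Cs^2/(4*ε)) * wF + ε * wG := by ring
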